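/- arXiv:1912.13301 — 11 statements merged into one kernel-verified Lean document; each statement's English description precedes it below -/
import Mathlib

section
/- Let d ≥ 1 and ℓ = d·⌈log₂ d⌉ + 2d. Define u ∈ {0,1}^ℓ as u = 1^d u_0 u_1 ⋯ u_{⌈log₂ d⌉}, where u_i is the length-d prefix of (1^{2^i} 0^{2^i})^d. Then u is a d-auto-cyclic vector: for all 1 ≤ i ≤ d, the Hamming distance between u and the vector 0^i u[0, ℓ−i−1] (the vector obtained by prepending i zeros to u and truncating to length ℓ) is at least d. -/
/-- The `d`-auto-cyclic vector of Levy and Yaakobi: `u = 1^d u_0 u_1 ⋯ u_{⌈log₂ d⌉}`,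
where `u_i` is the length-`d` prefix of `(1^{2^i} 0^{2^i})^d`. -/
def autoCyclicVec (d : ℕ) : ℕ → Bool := fun j =>
  if j < d then true
  else decide ((((j - d) % d) / 2 ^ ((j - d) / d)) % 2 = 0)

/-!
For `j < i`, position `j` of `u` lies in the prefix `1^d`, while the shifted vector has a
padding zero there. For `i ≤ j < d`, let `m` be the highest bit in which `j` and `j - i`
differ; both are below `d ≤ 2^⌈log₂ d⌉`, so the block `u_m` exists, and at offset `j` in it
`u` carries the negation of bit `m` of `j` while the shifted vector carries the negation of
bit `m` of `j - i`. The `d` disagreement positions so obtained are pairwise distinct, since the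
one chosen for `j` is congruent to `j` modulo `d`.
-/

theorem card_le_hammingDist_of_injective {ι κ : Type*} [Fintype ι] [Fintype κ]
    {β : ι → Type*} [∀ i, DecidableEq (β i)] {x y : ∀ i, β i} (φ : κ → ι)
    (hφ : Function.Injective φ)
    (hne : ∀ k, x (φ k) ≠ y (φ k)) : Fintype.card κ ≤ hammingDist x y :=
  Finset.card_le_card_of_injOn φ (by simp [Set.MapsTo, hne]) hφ.injOn

namespace Nat

theorem testBit_log2_xor_ne {a b : ℕ} (h : a ≠ b) :
    a.testBit (a ^^^ b).log2 ≠ b.testBit (a ^^^ b).log2 := by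
  have hbit := testBit_log2 (xor_ne_zero_iff.2 h)
  rw [testBit_xor] at hbit
  intro hab
  simp [hab] at hbit

theorem log2_xor_lt {a b k : ℕ} (h : a ≠ b) (ha : a < 2 ^ k) (hb : b < 2 ^ k) :
    (a ^^^ b).log2 < k :=
  (log2_lt (xor_ne_zero_iff.2 h)).2 (xor_lt_two_pow ha hb)

end Nat

theorem autoCyclicVec_of_lt {d j : ℕ} (hj : j < d) : autoCyclicVec d j = true := if_pos hj

theorem autoCyclicVec_add_mul_add (d m : ℕ) {j : ℕ} (hj : j < d) :
    autoCyclicVec d (d + m * d + j) = !j.testBit m := by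
  have hd : 0 < d := by omega
  rw [autoCyclicVec, if_neg (by omega), Nat.testBit_eq_decide_div_mod_eq,
    show d + m * d + j - d = d * m + j by ring_nf; omega, Nat.mul_add_mod, Nat.mul_add_div hd,
    Nat.mod_eq_of_lt hj, Nat.div_eq_of_lt hj, Nat.add_zero]
  rcases Nat.mod_two_eq_zero_or_one (j / 2 ^ m) with h | h <;> simp [h]

def mismatchPos (d i j : ℕ) : ℕ :=
  if j < i then j else d + (j ^^^ (j - i)).log2 * d + j

section mismatchPos

variable {d i j : ℕ}

theorem mismatchPos_mod (hj : j < d) : mismatchPos d i j % d = j := by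
  unfold mismatchPos
  split_ifs
  · exact Nat.mod_eq_of_lt hj
  · rw [show d + (j ^^^ (j - i)).log2 * d + j = d * ((j ^^^ (j - i)).log2 + 1) + j by ring,
      Nat.mul_add_mod, Nat.mod_eq_of_lt hj]

theorem mismatchPos_lt (hi : 0 < i) (hj : j < d) :
    mismatchPos d i j < d * Nat.clog 2 d + 2 * d := by
  unfold mismatchPos
  split_ifs
  · nlinarith
  · have hpow : d ≤ 2 ^ Nat.clog 2 d := Nat.le_pow_clog one_lt_two d
    have hm : (j ^^^ (j - i)).log2 + 1 ≤ Nat.clog 2 d :=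
      Nat.log2_xor_lt (by omega) (by omega) (by omega)
    nlinarith

theorem autoCyclicVec_mismatchPos_ne (hi : 0 < i) (hj : j < d) :
    autoCyclicVec d (mismatchPos d i j) ≠
      if mismatchPos d i j < i then false else autoCyclicVec d (mismatchPos d i j - i) := by
  unfold mismatchPos
  split_ifs
  · simp [autoCyclicVec_of_lt hj]
  · omega
  · set m := (j ^^^ (j - i)).log2
    rw [show d + m * d + j - i = d + m * d + (j - i) by omega,
      autoCyclicVec_add_mul_add _ _ hj, autoCyclicVec_add_mul_add _ _ (by omega)]
    simpa using Nat.testBit_log2_xor_ne (show j ≠ j - i by omega)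

end mismatchPos

theorem autoCyclicVec_is_d_auto_cyclic_general (d : ℕ) :
    ∀ i : ℕ, 1 ≤ i → i ≤ d →
      d ≤ hammingDist
        (fun j : Fin (d * Nat.clog 2 d + 2 * d) => autoCyclicVec d j)
        (fun j : Fin (d * Nat.clog 2 d + 2 * d) =>
          if (j : ℕ) < i then false else autoCyclicVec d ((j : ℕ) - i)) := by
  intro i hi _
  let φ : Fin d → Fin (d * Nat.clog 2 d + 2 * d) := fun j =>
    ⟨mismatchPos d i j, mismatchPos_lt hi j.2⟩
  have hφ : Function.Injective φ := fun j₁ j₂ h => Fin.ext <| by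
    rw [← mismatchPos_mod (i := i) j₁.2, ← mismatchPos_mod (i := i) j₂.2]
    exact congrArg (fun p : Fin _ => (p : ℕ) % d) h
  simpa only [Fintype.card_fin] using
    card_le_hammingDist_of_injective φ hφ fun j => autoCyclicVec_mismatchPos_ne hi j.2

/-- `u` is a `d`-auto-cyclic vector: for all `1 ≤ i ≤ d`, the Hamming distance between `u`
and `0^i u[0, ℓ−i−1]` is at least `d`, where `ℓ = d⌈log₂ d⌉ + 2d`. -/
theorem autoCyclicVec_is_d_auto_cyclic (d : ℕ) (hd : 1 ≤ d) :
    ∀ i : ℕ, 1 ≤ i → i ≤ d →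
      d ≤ hammingDist
        (fun j : Fin (d * Nat.clog 2 d + 2 * d) => autoCyclicVec d j)
        (fun j : Fin (d * Nat.clog 2 d + 2 * d) =>
          if (j : ℕ) < i then false else autoCyclicVec d ((j : ℕ) - i)) :=
  autoCyclicVec_is_d_auto_cyclic_general d
end

section
/- For ⌊2n/3⌋ + 1 ≤ d ≤ n, the maximum length of a binary robust positioning sequence of strength n and distance d equals n + 1, i.e., P(n,d) = n + 1. -/
/-- The contiguous length-`n` window of the sequence `s` starting at position `i`. -/
def window {α : Type*} (s : ℕ → α) (n i : ℕ) : Fin n → α := fun k => s (i + k)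

/-- `s` (restricted to its first `N` entries) is a robust positioning sequence of strength `n`
and distance `d`. -/
def IsRPS {α : Type*} [DecidableEq α] (s : ℕ → α) (N n d : ℕ) : Prop :=
  ∀ i j : ℕ, i + n ≤ N → j + n ≤ N → i ≠ j →
    d ≤ hammingDist (window s n i) (window s n j)

lemma tri_bound {n : ℕ} (a b c : Fin n → Bool) :
    hammingDist a b + hammingDist b c + hammingDist a c ≤ 2 * n := by
  simp only [hammingDist, Finset.card_filter]
  rw [← Finset.sum_add_distrib, ← Finset.sum_add_distrib]
  calc _ ≤ ∑ _k : Fin n, 2 := Finset.sum_le_sum (fun k _ => by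
        rcases Bool.eq_false_or_eq_true (a k) with h1 | h1 <;>
        rcases Bool.eq_false_or_eq_true (b k) with h2 | h2 <;>
        rcases Bool.eq_false_or_eq_true (c k) with h3 | h3 <;>
        simp [h1, h2, h3]
        )
    _ = 2 * n := by simp [Finset.sum_const, mul_comm]

lemma alt_dist (n : ℕ) :
    hammingDist (window (fun k => decide (k % 2 = 0)) n 0)
      (window (fun k => decide (k % 2 = 0)) n 1) = n := by
  have hall : ∀ k : Fin n, window (fun k => decide (k % 2 = 0)) n 0 k ≠
      window (fun k => decide (k % 2 = 0)) n 1 k := by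
    intro k
    simp only [window, ne_eq, decide_eq_decide]
    omega
  simp only [hammingDist]
  rw [Finset.filter_true_of_mem (fun k _ => hall k), Finset.card_univ, Fintype.card_fin]

/-- For `⌊2n/3⌋ + 1 ≤ d ≤ n`, the maximum length of a binary robust positioning sequence of
strength `n` and distance `d` equals `n + 1`, i.e., `P(n,d) = n + 1`. -/
theorem P_eq_of_large_distance (n d : ℕ) (h1 : 2 * n / 3 + 1 ≤ d) (h2 : d ≤ n) :
    (∃ s : ℕ → Bool, IsRPS s (n + 1) n d) ∧
    (∀ N : ℕ, (∃ s : ℕ → Bool, IsRPS s N n d) → N ≤ n + 1) := by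
  constructor
  · refine ⟨fun k => decide (k % 2 = 0), ?_⟩
    intro i j hi hj hij
    have hn : 1 ≤ n := le_trans (by omega) h2
    have key := alt_dist n
    have hi1 : i ≤ 1 := by omega
    have hj1 : j ≤ 1 := by omega
    interval_cases i <;> interval_cases j <;> first
      | omega
      | (rw [key]; exact h2)
      | (rw [hammingDist_comm, key]; exact h2)
  · rintro N ⟨s, hs⟩
    by_contra hN
    push_neg at hN
    have h01 := hs 0 1 (by omega) (by omega) (by omega)
    have h12 := hs 1 2 (by omega) (by omega) (by omega)
    have h02 := hs 0 2 (by omega) (by omega) (by omega)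
    have := tri_bound (window s n 0) (window s n 1) (window s n 2)
    omega
end

section
/- For every positive integer m divisible by 3 — equivalently, for n ≡ 0 (mod 3) — we have P(n, 2n/3) = n + 2. -/
/-! The windows of `100100…` at shifts `0`, `1`, `2` disagree in two positions out of every
three, which gives the lower bound. For the upper bound, a sequence of length `n + 3` has four
windows whose six pairwise distances sum to at least `6d ≥ 4n`, while a column of four bits has
at most four disagreeing pairs. So every column has two bits of each value, which forces
`s k = s (k + 2) ↔ s (k + 1) = s (k + 3)`: the windows at shifts `0` and `2` then agree everywhere
or nowhere, and neither fits the distance budget. -/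

open Finset

section Window

variable {α : Type*} [DecidableEq α]

theorem hammingDist_window_eq_sum (s : ℕ → α) (n i j : ℕ) :
    hammingDist (window s n i) (window s n j)
      = ∑ k ∈ range n, if s (k + i) ≠ s (k + j) then 1 else 0 := by
  rw [hammingDist, card_filter, ← Fin.sum_univ_eq_sum_range]
  simp only [window, add_comm i, add_comm j]

theorem hammingDist_window_eq_zero_or_eq {s : ℕ → α} {n p : ℕ}
    (h : ∀ k < n, (s k = s (k + p) ↔ s (k + 1) = s (k + 1 + p))) :
    hammingDist (window s n 0) (window s n p) = 0 ∨
      hammingDist (window s n 0) (window s n p) = n := by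
  have hconst : ∀ k < n, (s k = s (k + p) ↔ s 0 = s p) := by
    intro k hk
    induction k with
    | zero => simp
    | succ k ih => rw [← h k (by omega), ih (by omega)]
  by_cases h0 : s 0 = s p
  · left
    refine hammingDist_eq_zero.2 (funext fun k => ?_)
    simpa [window, add_comm] using (hconst k k.2).2 h0
  · right
    rw [hammingDist, filter_true_of_mem, card_univ, Fintype.card_fin]
    intro k _
    simpa [window, add_comm] using mt (hconst k k.2).1 h0

end Window

theorem sum_range_mul_of_periodic {M : Type*} [AddCommMonoid M] {f : ℕ → M} {p : ℕ}
    (hf : Function.Periodic f p) (m : ℕ) :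
    ∑ k ∈ range (m * p), f k = m • ∑ k ∈ range p, f k := by
  induction m with
  | zero => simp
  | succ m ih =>
    rw [add_mul, one_mul, sum_range_add, ih, succ_nsmul]
    congr 1
    exact sum_congr rfl fun k _ => by simpa [add_comm] using hf.nat_mul m k

theorem isRPS_mod_three (m : ℕ) :
    IsRPS (fun i => decide (i % 3 = 0)) (3 * m + 2) (3 * m) (2 * m) := by
  intro i j hi hj hij
  have hperiodic : Function.Periodic
      (fun k => if decide ((k + i) % 3 = 0) ≠ decide ((k + j) % 3 = 0) then 1 else 0) 3 := by
    intro k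
    simp only [add_right_comm k 3, Nat.add_mod_right]
  rw [hammingDist_window_eq_sum, mul_comm 3 m, sum_range_mul_of_periodic hperiodic, smul_eq_mul]
  have : i ≤ 2 := by omega
  have : j ≤ 2 := by omega
  interval_cases i <;> interval_cases j <;> simp_all [sum_range_succ] <;> omega

def pairDisagreements (a b c d : Bool) : ℕ :=
  (if a ≠ b then 1 else 0) + (if a ≠ c then 1 else 0) + (if a ≠ d then 1 else 0) +
    (if b ≠ c then 1 else 0) + (if b ≠ d then 1 else 0) + (if c ≠ d then 1 else 0)

theorem pairDisagreements_le_four (a b c d : Bool) : pairDisagreements a b c d ≤ 4 := by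
  revert a b c d; decide

theorem eq_iff_eq_of_pairDisagreements_eq_four {a b c d : Bool}
    (h : pairDisagreements a b c d = 4) : (a = c ↔ b = d) := by
  revert a b c d; decide

theorem sum_pairDisagreements_window (s : ℕ → Bool) (n : ℕ) :
    ∑ k ∈ range n, pairDisagreements (s k) (s (k + 1)) (s (k + 2)) (s (k + 3)) =
      hammingDist (window s n 0) (window s n 1) + hammingDist (window s n 0) (window s n 2) +
      hammingDist (window s n 0) (window s n 3) + hammingDist (window s n 1) (window s n 2) +
      hammingDist (window s n 1) (window s n 3) + hammingDist (window s n 2) (window s n 3) := by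
  simp only [pairDisagreements, hammingDist_window_eq_sum, sum_add_distrib, add_zero]

theorem IsRPS.le_add_two {s : ℕ → Bool} {N n d : ℕ} (hs : IsRPS s N n d) (hn : 0 < n)
    (hd : 2 * n ≤ 3 * d) : N ≤ n + 2 := by
  by_contra! hN
  have hD : ∀ i j, i ≤ 3 → j ≤ 3 → i ≠ j → d ≤ hammingDist (window s n i) (window s n j) :=
    fun i j hi hj hij => hs i j (by omega) (by omega) hij
  have := hD 0 1; have := hD 0 2; have := hD 0 3; have := hD 1 2; have := hD 1 3; have := hD 2 3
  have hcolumn_le : ∀ k ∈ range n,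
      pairDisagreements (s k) (s (k + 1)) (s (k + 2)) (s (k + 3)) ≤ 4 :=
    fun k _ => pairDisagreements_le_four _ _ _ _
  have htotal_le := sum_le_sum hcolumn_le
  rw [sum_const, card_range, smul_eq_mul, sum_pairDisagreements_window] at htotal_le
  have hcolumn_eq : ∀ k ∈ range n,
      pairDisagreements (s k) (s (k + 1)) (s (k + 2)) (s (k + 3)) = 4 := by
    refine (sum_eq_sum_iff_of_le hcolumn_le).1 ?_
    rw [sum_const, card_range, smul_eq_mul, sum_pairDisagreements_window]
    omega
  have h02 := hammingDist_window_eq_zero_or_eq fun k hk =>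
    eq_iff_eq_of_pairDisagreements_eq_four (hcolumn_eq k (mem_range.2 hk))
  omega

/-- For `n ≡ 0 (mod 3)` (with `n` positive), `P(n, 2n/3) = n + 2`. -/
theorem P_eq_of_two_thirds (n : ℕ) (hn : 0 < n) (h3 : 3 ∣ n) :
    (∃ s : ℕ → Bool, IsRPS s (n + 2) n (2 * n / 3)) ∧
    (∀ N : ℕ, (∃ s : ℕ → Bool, IsRPS s N n (2 * n / 3)) → N ≤ n + 2) := by
  obtain ⟨m, rfl⟩ := h3
  rw [show 2 * (3 * m) / 3 = 2 * m by omega]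
  exact ⟨⟨_, isRPS_mod_three m⟩, fun N ⟨s, hs⟩ => hs.le_add_two hn (by omega)⟩
end

section
/- For n ≡ 0 (mod 3), the sequence (100)^{n/3} 10 of length n + 2 is a binary robust positioning sequence of strength n and distance 2n/3: any two of its three contiguous subwords of length n have Hamming distance at least 2n/3. -/
/-!
Two windows of an `a`-periodic sequence disagree on an `a`-periodic set of positions, so on
windows of length `m * a` their Hamming distance is `m` times the distance on one period.
For the pattern `100`, two distinct shifts disagree in exactly `2` of the `3` positions.
-/

theorem hammingDist_window_eq_count {α : Type*} [DecidableEq α] (s : ℕ → α) (n i j : ℕ) :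
    hammingDist (window s n i) (window s n j) = Nat.count (fun k => s (i + k) ≠ s (j + k)) n := by
  rw [Nat.count_eq_card_filter_range, ← Nat.Iio_eq_range, ← Fin.map_valEmbedding_univ,
    Finset.filter_map, Finset.card_map]
  rfl

theorem Nat.count_mul_of_periodic {p : ℕ → Prop} [DecidablePred p] {a : ℕ}
    (hp : Function.Periodic p a) (m : ℕ) : Nat.count p (m * a) = m * Nat.count p a := by
  induction m with
  | zero => simp
  | succ m ih =>
    rw [add_mul, one_mul, Nat.count_add, ih, add_mul, one_mul]
    congr 2
    funext k
    rw [add_comm]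
    exact hp.nat_mul m k

theorem hammingDist_window_mul_of_periodic {α : Type*} [DecidableEq α] {s : ℕ → α} {a : ℕ}
    (hs : Function.Periodic s a) (m i j : ℕ) :
    hammingDist (window s (m * a) i) (window s (m * a) j) =
      m * hammingDist (window s a i) (window s a j) := by
  rw [hammingDist_window_eq_count, hammingDist_window_eq_count]
  exact Nat.count_mul_of_periodic (fun k => by simp only [← add_assoc, hs _]) m

theorem hammingDist_window_mod_three {i j : ℕ} (hi : i < 3) (hj : j < 3) (hij : i ≠ j) :
    hammingDist (window (fun k => decide (k % 3 = 0)) 3 i)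
      (window (fun k => decide (k % 3 = 0)) 3 j) = 2 := by
  interval_cases i <;> interval_cases j <;> first | decide | omega

/-- For `n ≡ 0 (mod 3)`, the sequence `(100)^{n/3} 10` of length `n + 2` (whose `j`-th entry is
`1` iff `j ≡ 0 (mod 3)`) is a binary robust positioning sequence of strength `n` and distance
`2n/3`: any two of its three contiguous length-`n` subwords have Hamming distance `≥ 2n/3`. -/
theorem period_three_seq_is_rps (n : ℕ) (h3 : 3 ∣ n) :
    IsRPS (fun j => decide (j % 3 = 0)) (n + 2) n (2 * n / 3) := by
  obtain ⟨m, rfl⟩ := h3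
  intro i j hi hj hij
  have hs : Function.Periodic (fun k => decide (k % 3 = 0)) 3 := fun k => by simp
  rw [Nat.mul_comm 3 m, hammingDist_window_mul_of_periodic hs,
    hammingDist_window_mod_three (by omega) (by omega) hij]
  omega
end

section
/- Define binary sequences recursively by S_1 = 0001000 and S_{m+1} = S_m[0, m+3] · ¬S_m[m+4] · S_m[m+2, 3m+3] (where ¬ denotes bit complement and S[a,b] denotes the subword from position a to b inclusive, 0-indexed). Then for every m ≥ 1, S_m has length 3m + 4 and is a binary robust positioning sequence of strength 3m+1 and distance 2m: any two distinct contiguous subwords of S_m of length 3m+1 have Hamming distance at least 2m. -/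
/-- The recursively defined sequences: `S_1 = 0001000` and
`S_{m+1} = S_m[0, m+3] · ¬S_m[m+4] · S_m[m+2, 3m+3]`. -/
def Sseq : ℕ → List Bool
  | 0 => []
  | 1 => [false, false, false, true, false, false, false]
  | (m + 2) =>
      let p := Sseq (m + 1)
      p.take ((m + 1) + 4) ++ [!(p.getD ((m + 1) + 4) false)] ++ p.drop ((m + 1) + 2)

theorem List.getD_take {α : Type*} (l : List α) (d : α) {k j : ℕ} (h : j < k) :
    (l.take k).getD j d = l.getD j d := by
  simp [List.getD_eq_getElem?_getD, List.getElem?_take_of_lt h]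

theorem List.getD_drop {α : Type*} (l : List α) (d : α) (k j : ℕ) :
    (l.drop k).getD j d = l.getD (k + j) d := by
  simp [List.getD_eq_getElem?_getD]

theorem Finset.card_image_add_two_mul_range (a c : ℕ) :
    ((Finset.range c).image (a + 2 * ·)).card = c :=
  (Finset.card_image_of_injective _ fun _ _ h => by omega).trans (Finset.card_range c)

section Window

variable {α : Type*} [DecidableEq α] {s : ℕ → α}

theorem card_le_hammingDist_window {n i k : ℕ} (P : Finset ℕ)
    (hP : ∀ p ∈ P, i ≤ p ∧ p < i + n) (hne : ∀ p ∈ P, s p ≠ s (p + k)) :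
    P.card ≤ hammingDist (window s n i) (window s n (i + k)) := by
  refine Finset.card_le_card_of_surjOn (fun a : Fin n => i + a) fun p hp => ?_
  obtain ⟨hip, hpn⟩ := hP p hp
  refine ⟨⟨p - i, by omega⟩, Finset.mem_coe.2 (Finset.mem_filter.2 ⟨Finset.mem_univ _, ?_⟩),
    by simp only; omega⟩
  show s (i + (p - i)) ≠ s (i + k + (p - i))
  rw [show i + (p - i) = p by omega, show i + k + (p - i) = p + k by omega]
  exact hne p hp

theorem isRPS_of_forall_add {N n d : ℕ}
    (h : ∀ i k, 0 < k → i + k + n ≤ N → d ≤ hammingDist (window s n i) (window s n (i + k))) :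
    IsRPS s N n d := by
  intro i j hi hj hij
  rcases Nat.lt_or_gt_of_ne hij with hlt | hlt
  · obtain ⟨k, rfl⟩ := Nat.exists_eq_add_of_lt hlt
    exact h i (k + 1) k.succ_pos (by omega)
  · obtain ⟨k, rfl⟩ := Nat.exists_eq_add_of_lt hlt
    rw [hammingDist_comm]
    exact h j (k + 1) k.succ_pos (by omega)

end Window

def Sbit (m j : ℕ) : Bool :=
  (3 ≤ j ∧ j ≤ m + 3 ∧ j % 2 = 1) ∨
    (m + 4 ≤ j ∧ j ≤ 3 * m ∧ ((m + j) % 4 = 0 ∨ (m + j) % 4 = 3))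

lemma Sbit_succ_of_lt {m j : ℕ} (hj : j < m + 4) : Sbit (m + 1) j = Sbit m j := by
  simp only [Sbit, decide_eq_decide]; omega

lemma Sbit_succ_self {m : ℕ} (hm : 1 ≤ m) : Sbit (m + 1) (m + 4) = !Sbit m (m + 4) := by
  rw [Sbit, Sbit, ← decide_not, decide_eq_decide]; omega

lemma Sbit_succ_of_gt {m j : ℕ} (hm : 1 ≤ m) (hj : m + 4 < j) :
    Sbit (m + 1) j = Sbit m (j - 3) := by
  simp only [Sbit, decide_eq_decide]; omega

lemma Sseq_succ {m : ℕ} (hm : 1 ≤ m) : Sseq (m + 1) =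
    (Sseq m).take (m + 4) ++ [!(Sseq m).getD (m + 4) false] ++ (Sseq m).drop (m + 2) := by
  obtain ⟨k, rfl⟩ := Nat.exists_eq_add_of_le' hm
  rfl

lemma Sseq_length {m : ℕ} (hm : 1 ≤ m) : (Sseq m).length = 3 * m + 4 := by
  induction m, hm using Nat.le_induction with
  | base => rfl
  | succ m hm ih =>
    simp only [Sseq_succ hm, List.length_append, List.length_take, List.length_drop,
      List.length_singleton, ih]
    omega

lemma Sseq_getD {m : ℕ} (hm : 1 ≤ m) (j : ℕ) : (Sseq m).getD j false = Sbit m j := by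
  induction m, hm using Nat.le_induction generalizing j with
  | base =>
    by_cases hj : j < 7
    · interval_cases j <;> rfl
    · have hlen : (Sseq 1).length ≤ j := by
        simp only [Sseq, List.length_cons, List.length_nil]; omega
      rw [List.getD_eq_default _ _ hlen, eq_comm, Sbit, decide_eq_false_iff_not]
      omega
  | succ m hm ih =>
    have hlen : ((Sseq m).take (m + 4)).length = m + 4 := by
      simp only [List.length_take, Sseq_length hm]; omega
    rw [Sseq_succ hm, List.append_assoc]
    rcases lt_trichotomy j (m + 4) with hj | rfl | hj
    · rw [List.getD_append _ _ _ _ (by omega), List.getD_take _ _ hj, ih, Sbit_succ_of_lt hj]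
    · rw [List.getD_append_right _ _ _ _ hlen.le, hlen, Nat.sub_self, List.singleton_append,
        List.getD_cons_zero, ih, Sbit_succ_self hm]
    · rw [List.getD_append_right _ _ _ _ (by omega), hlen, List.singleton_append,
        show j - (m + 4) = (j - (m + 5)) + 1 by omega, List.getD_cons_succ, List.getD_drop, ih,
        Sbit_succ_of_gt hm hj]
      congr 1; omega

section Shifts

variable {m : ℕ} (hm : 1 ≤ m)
include hm

lemma two_mul_le_hammingDist_Sbit_shift_one {i : ℕ} (hi : i ≤ 2) :
    2 * m ≤
      hammingDist (window (Sbit m) (3 * m + 1) i) (window (Sbit m) (3 * m + 1) (i + 1)) := by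
  let P := Finset.Icc 2 (m + 2) ∪ (Finset.range (m - 1)).image (m + 4 + 2 * ·)
  have hP : ∀ p ∈ P, 2 ≤ p ∧ p ≤ m + 2 ∨ ∃ t < m - 1, p = m + 4 + 2 * t := by
    simp [P, eq_comm]
  have hcard : P.card = 2 * m := by
    rw [Finset.card_union_of_disjoint, Nat.card_Icc, Finset.card_image_add_two_mul_range]
    · omega
    simp only [Finset.disjoint_left, Finset.mem_Icc, Finset.mem_image]
    rintro p hp ⟨t, -, rfl⟩; omega
  rw [← hcard]
  apply card_le_hammingDist_window P
  · intro p hp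
    rcases hP p hp with hp | ⟨t, ht, rfl⟩ <;> omega
  · intro p hp
    simp only [Sbit, ne_eq, decide_eq_decide]
    rcases hP p hp with hp | ⟨t, ht, rfl⟩ <;> omega

lemma two_mul_le_hammingDist_Sbit_shift_two {i : ℕ} (hi : i ≤ 1) :
    2 * m ≤
      hammingDist (window (Sbit m) (3 * m + 1) i) (window (Sbit m) (3 * m + 1) (i + 2)) := by
  let P := insert 1 (Finset.Icc (m + 2) (3 * m))
  have hP : ∀ p ∈ P, p = 1 ∨ m + 2 ≤ p ∧ p ≤ 3 * m := by simp [P]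
  have hcard : P.card = 2 * m := by
    rw [Finset.card_insert_of_notMem (by simp), Nat.card_Icc]; omega
  rw [← hcard]
  apply card_le_hammingDist_window P
  · intro p hp
    have := hP p hp; omega
  · intro p hp
    have := hP p hp
    simp only [Sbit, ne_eq, decide_eq_decide]
    -- `omega` is incomplete and needs the residue of `m` mod 4 here.
    rcases (by omega : m % 4 = 0 ∨ m % 4 = 1 ∨ m % 4 = 2 ∨ m % 4 = 3) with h | h | h | h <;>
      omega

lemma two_mul_le_hammingDist_Sbit_shift_three :
    2 * m ≤ hammingDist (window (Sbit m) (3 * m + 1) 0) (window (Sbit m) (3 * m + 1) 3) := by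
  let P := insert 0 (insert (3 * m)
    (Finset.Icc 2 m ∪ (Finset.range (m - 1)).image (m + 3 + 2 * ·)))
  have hP : ∀ p ∈ P,
      p = 0 ∨ p = 3 * m ∨ 2 ≤ p ∧ p ≤ m ∨ ∃ t < m - 1, p = m + 3 + 2 * t := by
    simp [P, eq_comm]
  have hcard : P.card = 2 * m := by
    rw [Finset.card_insert_of_notMem, Finset.card_insert_of_notMem, Finset.card_union_of_disjoint,
      Nat.card_Icc, Finset.card_image_add_two_mul_range]
    · omega
    all_goals
      simp only [Finset.disjoint_left, Finset.mem_insert, Finset.mem_union, Finset.mem_Icc,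
        Finset.mem_image]
    · rintro p hp ⟨t, -, rfl⟩; omega
    · rintro (h | ⟨t, -, h⟩) <;> omega
    · rintro (h | h | ⟨t, -, h⟩) <;> omega
  rw [← hcard]
  refine card_le_hammingDist_window (i := 0) (k := 3) P (fun p hp => ?_) (fun p hp => ?_)
  · rcases hP p hp with hp | hp | hp | ⟨t, ht, rfl⟩ <;> omega
  · simp only [Sbit, ne_eq, decide_eq_decide]
    rcases hP p hp with hp | hp | hp | ⟨t, ht, rfl⟩ <;> omega

end Shifts

/-- For every `m ≥ 1`, `S_m` has length `3m + 4` and is a binary robust positioning sequence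
of strength `3m + 1` and distance `2m`. -/
theorem Sseq_is_rps (m : ℕ) (hm : 1 ≤ m) :
    (Sseq m).length = 3 * m + 4 ∧
    IsRPS (fun j => (Sseq m).getD j false) (3 * m + 4) (3 * m + 1) (2 * m) := by
  refine ⟨Sseq_length hm, ?_⟩
  rw [show (fun j => (Sseq m).getD j false) = Sbit m from funext (Sseq_getD hm)]
  refine isRPS_of_forall_add fun i k hk hik => ?_
  have hk3 : k ≤ 3 := by omega
  interval_cases k
  · exact two_mul_le_hammingDist_Sbit_shift_one hm (by omega)
  · exact two_mul_le_hammingDist_Sbit_shift_two hm (by omega)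
  · obtain rfl : i = 0 := by omega
    exact two_mul_le_hammingDist_Sbit_shift_three hm
end

section
/- For every positive integer m, P(3m+2, 2m+1) = 3m + 4: the maximum length of a binary sequence in which any two distinct contiguous subwords of length 3m+2 have Hamming distance at least 2m+1 is exactly 3m+4. -/
/-!
For binary words the three pairwise Hamming distances of `x, y, z` add up to twice the number
of coordinates at which `x, y, z` are not all equal.

Lower bound: in `k ↦ (k % 3 = 0)`, i.e. `(100)^m 1001`, two of the three windows of length
`3m + 2` agree exactly on one residue class of positions mod 3, hence differ in `≥ 2m + 1` places.

Upper bound: take four windows of length `n = 3m + 2` at pairwise distance `≥ 2m + 1`. Since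
`3 (2m + 1) > 2 (n - 1)`, no three of them agree at any position, so every column of the
`4 × n` array is balanced and `s k = s (k + 2) ↔ s (k + 1) = s (k + 3)`. Hence windows `0` and
`2` are equal or complementary; the first contradicts `d > 0`, and in the second window `1`
differs from exactly one of them at each position, giving `2 (2m + 1) ≤ n`.
-/

open Finset

section Bool

variable {ι : Type*} [Fintype ι]

theorem Bool.hammingDist_add_add_eq (x y z : ι → Bool) :
    hammingDist x y + hammingDist y z + hammingDist x z =
      2 * #{i | ¬(x i = y i ∧ y i = z i)} := by
  simp only [hammingDist, card_filter, ← sum_add_distrib, mul_sum]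
  refine sum_congr rfl fun i _ => ?_
  cases x i <;> cases y i <;> cases z i <;> rfl

theorem Bool.hammingDist_add_add_le (x y z : ι → Bool) :
    hammingDist x y + hammingDist y z + hammingDist x z ≤ 2 * Fintype.card ι := by
  rw [Bool.hammingDist_add_add_eq]
  exact Nat.mul_le_mul_left 2 (card_le_univ _)

theorem Bool.hammingDist_add_add_add_two_le_of_eq {x y z : ι → Bool} (i : ι) (hxy : x i = y i)
    (hyz : y i = z i) :
    hammingDist x y + hammingDist y z + hammingDist x z + 2 ≤ 2 * Fintype.card ι := by
  rw [Bool.hammingDist_add_add_eq, ← mul_add_one]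
  exact Nat.mul_le_mul_left 2 (card_lt_univ_of_notMem (x := i) (by simp [hxy, hyz]))

end Bool

theorem card_filter_add_mod_eq_le {q : ℕ} (a r n : ℕ) :
    #{k : Fin n | (a + k) % q = r} ≤ n / q + 1 := by
  calc #{k : Fin n | (a + k) % q = r}
      ≤ #(range (n / q + 1)) := by
        refine card_le_card_of_injOn (fun k => k / q) (fun k _ => ?_) fun k hk k' hk' hkk' => ?_
        · simpa [Nat.lt_succ_iff] using Nat.div_le_div_right k.2.le
        · simp only [coe_filter, mem_univ, true_and, Set.mem_ofPred_eq] at hk hk'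
          have hmod : (k : ℕ) ≡ k' [MOD q] := Nat.ModEq.add_left_cancel' a (hk.trans hk'.symm)
          ext
          rw [← Nat.mod_add_div k q, ← Nat.mod_add_div k' q, hmod,
            show (k : ℕ) / q = k' / q from hkk']
    _ = n / q + 1 := card_range _

theorem isRPS_mod_three_s10 {N n d : ℕ} (hN : N ≤ n + 2) (hd : d + n / 3 + 1 ≤ n) :
    IsRPS (fun k => decide (k % 3 = 0)) N n d := by
  intro i j hi hj hij
  set t : ℕ → Bool := fun k => decide (k % 3 = 0)
  -- `i + k` and `j + k` are never both `≡ 0`, so they agree where the third offset is `≡ 0`.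
  have hagree : #{k : Fin n | window t n i k = window t n j k} ≤ n / 3 + 1 := by
    convert card_filter_add_mod_eq_le (q := 3) (3 - i - j) 0 n using 3 with k
    simp only [window, t, decide_eq_decide]
    grind
  have hsplit := card_filter_add_card_filter_not (s := univ)
    (fun k : Fin n => window t n i k = window t n j k)
  rw [card_univ, Fintype.card_fin] at hsplit
  simp only [hammingDist, ne_eq]
  omega

namespace IsRPS

variable {s : ℕ → Bool} {N n d : ℕ}

theorem not_eq_and_eq (hs : IsRPS s N n d) (hd : 2 * n < 3 * d + 2) {a b c k : ℕ}
    (hab : a < b) (hbc : b < c) (hc : c + n ≤ N) (hk : k < n) :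
    ¬(s (a + k) = s (b + k) ∧ s (b + k) = s (c + k)) := by
  rintro ⟨hsab, hsbc⟩
  have hsum := Bool.hammingDist_add_add_add_two_le_of_eq (x := window s n a)
    (y := window s n b) (z := window s n c) ⟨k, hk⟩ hsab hsbc
  have hdab := hs a b (by omega) (by omega) hab.ne
  have hdbc := hs b c (by omega) hc hbc.ne
  have hdac := hs a c (by omega) hc (hab.trans hbc).ne
  rw [Fintype.card_fin] at hsum
  omega

theorem eq_add_two_iff_succ (hs : IsRPS s N n d) (hd : 2 * n < 3 * d + 2) (hN : n + 3 ≤ N)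
    {k : ℕ} (hk : k < n) : s k = s (k + 2) ↔ s (k + 1) = s (k + 3) := by
  have h012 := hs.not_eq_and_eq hd (a := 0) (b := 1) (c := 2) (by omega) (by omega) (by omega) hk
  have h013 := hs.not_eq_and_eq hd (a := 0) (b := 1) (c := 3) (by omega) (by omega) (by omega) hk
  have h023 := hs.not_eq_and_eq hd (a := 0) (b := 2) (c := 3) (by omega) (by omega) (by omega) hk
  have h123 := hs.not_eq_and_eq hd (a := 1) (b := 2) (c := 3) (by omega) (by omega) (by omega) hk
  simp only [add_comm _ k] at h012 h013 h023 h123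
  revert h012 h013 h023 h123
  cases s k <;> cases s (k + 1) <;> cases s (k + 2) <;> cases s (k + 3) <;> decide

theorem eq_add_two_iff (hs : IsRPS s N n d) (hd : 2 * n < 3 * d + 2) (hN : n + 3 ≤ N)
    {k : ℕ} (hk : k < n) : s k = s (k + 2) ↔ s 0 = s 2 := by
  induction k with
  | zero => rfl
  | succ k ih => exact (hs.eq_add_two_iff_succ hd hN (by omega)).symm.trans (ih (by omega))

theorem le_add_two_s10 (hs : IsRPS s N n d) (hd : 2 * n < 3 * d + 2) (hn : n < 2 * d) :
    N ≤ n + 2 := by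
  by_contra! hN
  have h02 := hs 0 2 (by omega) (by omega) (by omega)
  by_cases hs02 : s 0 = s 2
  · have hw : window s n 0 = window s n 2 := by
      funext k
      simpa [window, add_comm 2] using (hs.eq_add_two_iff hd hN k.2).2 hs02
    rw [hw, hammingDist_self] at h02
    omega
  · have hw : hammingDist (window s n 0) (window s n 2) = n := by
      rw [hammingDist, filter_true_of_mem, card_univ, Fintype.card_fin]
      intro k _
      simpa [window, add_comm 2] using mt (hs.eq_add_two_iff hd hN k.2).1 hs02
    have hsum := Bool.hammingDist_add_add_le (window s n 0) (window s n 1) (window s n 2)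
    have h01 := hs 0 1 (by omega) (by omega) (by omega)
    have h12 := hs 1 2 (by omega) (by omega) (by omega)
    rw [Fintype.card_fin] at hsum
    omega

end IsRPS

/-- For every positive integer `m`, `P(3m+2, 2m+1) = 3m + 4`. -/
theorem P_3m2_2m1 (m : ℕ) (hm : 1 ≤ m) :
    (∃ s : ℕ → Bool, IsRPS s (3 * m + 4) (3 * m + 2) (2 * m + 1)) ∧
    (∀ N : ℕ, (∃ s : ℕ → Bool, IsRPS s N (3 * m + 2) (2 * m + 1)) → N ≤ 3 * m + 4) :=
  ⟨⟨_, isRPS_mod_three_s10 (by omega) (by omega)⟩,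
    fun _ ⟨_, hs⟩ => hs.le_add_two_s10 (by omega) (by omega)⟩
end

section
/- For every positive integer m, the binary sequence (100)^m 1001 of length 3m+4 is a robust positioning sequence of strength 3m+2 and distance 2m+1: any two of its three contiguous subwords of length 3m+2 have Hamming distance at least 2m+1. -/
/-! Windows of length `3m+2` can only start at `0`, `1` or `2`, and the indicator of `3ℕ` shifted
by two distinct such starts disagrees on two of the three residues mod `3`. Among the positions
`0, …, 3m+1` there are `m+1` of residue `0`, `m+1` of residue `1` and `m` of residue `2`, so two
distinct residues cover at least `2m+1` positions. -/

open Function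

lemma periodic_decide_mod_three_eq_zero : Periodic (fun x : ℕ => decide (x % 3 = 0)) 3 := by
  intro x
  simp only [Nat.add_mod_right]

lemma le_hammingDist_of_periodic_three {α : Type*} [DecidableEq α] {s t : ℕ → α}
    (hs : Periodic s 3) (ht : Periodic t 3) {o₀ o₁ : ℕ} (h₀ : o₀ < 3) (h₁ : o₁ < 3)
    (hne : o₀ ≠ o₁) (hd₀ : s o₀ ≠ t o₀) (hd₁ : s o₁ ≠ t o₁) (m : ℕ) :
    2 * m + 1 ≤ hammingDist (fun k : Fin (3 * m + 2) => s k) (fun k => t k) := by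
  wlog hlt : o₀ < o₁ generalizing o₀ o₁
  · exact this h₁ h₀ hne.symm hd₁ hd₀ (by omega)
  -- `r ↦ 3 ⌊r/2⌋ + o₀` or `o₁` (by parity of `r`) embeds `Fin (2m+1)` into the disagreements;
  -- it fits into `Fin (3m+2)` because `o₀ < o₁ < 3` forces `o₀ ≤ 1`.
  let f : Fin (2 * m + 1) → Fin (3 * m + 2) := fun r =>
    ⟨3 * (r / 2) + if r.val % 2 = 0 then o₀ else o₁, by split_ifs <;> omega⟩
  have hdiff (q o : ℕ) (hd : s o ≠ t o) : s (3 * q + o) ≠ t (3 * q + o) := by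
    have hs' := hs.nat_mul q o
    have ht' := ht.nat_mul q o
    rw [Nat.cast_id, mul_comm] at hs' ht'
    rwa [add_comm, hs', ht']
  calc 2 * m + 1 = (Finset.univ : Finset (Fin (2 * m + 1))).card := by simp
    _ ≤ hammingDist (fun k : Fin (3 * m + 2) => s k) (fun k => t k) := by
      refine Finset.card_le_card_of_injOn f (fun k _ => ?_) (fun k _ k' _ hkk' => ?_)
      · simp only [Finset.mem_coe, Finset.mem_filter, Finset.mem_univ, true_and, f]
        split_ifs
        exacts [hdiff _ _ hd₀, hdiff _ _ hd₁]
      · have := congrArg Fin.val hkk'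
        simp only [f] at this
        ext
        split_ifs at this <;> omega

theorem seq_100_1001_is_rps_general (m : ℕ) :
    IsRPS (fun j => decide (j % 3 = 0)) (3 * m + 4) (3 * m + 2) (2 * m + 1) := by
  intro i j hi hj hij
  -- the shifted indicators disagree exactly at the offsets `(3 - i) % 3` and `(3 - j) % 3`
  exact le_hammingDist_of_periodic_three (periodic_decide_mod_three_eq_zero.const_add i)
    (periodic_decide_mod_three_eq_zero.const_add j) (o₀ := (3 - i) % 3) (o₁ := (3 - j) % 3)
    (by omega) (by omega) (by omega) (by simp only [ne_eq, decide_eq_decide]; omega)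
    (by simp only [ne_eq, decide_eq_decide]; omega) m

/-- For every positive integer `m`, the binary sequence `(100)^m 1001` of length `3m+4`
(whose `j`-th entry is `1` iff `j ≡ 0 (mod 3)`) is a robust positioning sequence of strength
`3m+2` and distance `2m+1`. -/
theorem seq_100_1001_is_rps (m : ℕ) (hm : 1 ≤ m) :
    IsRPS (fun j => decide (j % 3 = 0)) (3 * m + 4) (3 * m + 2) (2 * m + 1) :=
  seq_100_1001_is_rps_general m
end

section
/- For all n ≥ 1 and q ≥ 1, P_q(n,n) = q + n − 1: the maximum length of a q-ary sequence in which any two distinct contiguous length-n subwords differ in every position is exactly q + n − 1. -/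
lemma all_diff_of_dist {α : Type*} [DecidableEq α] {n : ℕ} {f g : Fin n → α}
    (h : n ≤ hammingDist f g) (k : Fin n) : f k ≠ g k := by
  have h2 : hammingDist f g ≤ n := by
    simpa using hammingDist_le_card_fintype (x := f) (y := g)
  have heq : hammingDist f g = n := le_antisymm h2 h
  rw [hammingDist] at heq
  have : (Finset.univ.filter fun i => f i ≠ g i) = Finset.univ :=
    Finset.eq_univ_of_card _ (by simpa using heq)
  have hk : k ∈ Finset.univ.filter fun i => f i ≠ g i := by rw [this]; exact Finset.mem_univ k
  simpa using (Finset.mem_filter.mp hk).2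

/-- For all `n ≥ 1` and `q ≥ 1`, `P_q(n,n) = q + n − 1`: the maximum length of a `q`-ary
sequence in which any two distinct contiguous length-`n` subwords differ in every position
is exactly `q + n − 1`. -/
theorem Pq_n_n (n q : ℕ) (hn : 1 ≤ n) (hq : 1 ≤ q) :
    (∃ s : ℕ → Fin q, IsRPS s (q + n - 1) n n) ∧
    (∀ N : ℕ, (∃ s : ℕ → Fin q, IsRPS s N n n) → N ≤ q + n - 1) := by
  constructor
  · refine ⟨fun i => ⟨i % q, Nat.mod_lt _ hq⟩, ?_⟩
    intro i j hi hj hij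
    have hiq : i < q := by omega
    have hjq : j < q := by omega
    have hall : ∀ k : Fin n, window (fun i => (⟨i % q, Nat.mod_lt _ hq⟩ : Fin q)) n i k ≠
        window (fun i => (⟨i % q, Nat.mod_lt _ hq⟩ : Fin q)) n j k := by
      intro k h
      simp only [window, Fin.mk.injEq] at h
      have : i % q = j % q := by
        have := (Nat.ModEq.add_right_cancel' (k : ℕ) (h : (i + k) ≡ (j + k) [MOD q]))
        exact this
      rw [Nat.mod_eq_of_lt hiq, Nat.mod_eq_of_lt hjq] at this
      exact hij this
    have : hammingDist (window (fun i => (⟨i % q, Nat.mod_lt _ hq⟩ : Fin q)) n i)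
        (window (fun i => (⟨i % q, Nat.mod_lt _ hq⟩ : Fin q)) n j) = n := by
      rw [hammingDist]
      have : (Finset.univ.filter fun k : Fin n =>
          window (fun i => (⟨i % q, Nat.mod_lt _ hq⟩ : Fin q)) n i k ≠
          window (fun i => (⟨i % q, Nat.mod_lt _ hq⟩ : Fin q)) n j k) = Finset.univ :=
        Finset.eq_univ_iff_forall.mpr fun k => Finset.mem_filter.mpr ⟨Finset.mem_univ k, hall k⟩
      rw [this]; simp
    omega
  · rintro N ⟨s, hs⟩
    by_cases hN : N < n
    · omega
    push_neg at hN
    have hinj : Function.Injective (fun i : Fin (N - n + 1) => s i) := by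
      intro i j hij
      by_contra hne
      have hne' : (i : ℕ) ≠ (j : ℕ) := fun h => hne (Fin.ext h)
      have h := hs i j (by omega) (by omega) hne'
      exact all_diff_of_dist h ⟨0, hn⟩ (by simpa [window] using hij)
    have := Fintype.card_le_of_injective _ hinj
    simp at this
    omega
end

section
/- A cyclic sequence s of length N over an alphabet Σ is an (n, n−1)-cyclic robust positioning sequence if and only if for every δ ∈ {1, …, n−1} and every ordered pair (a,b) ∈ Σ², there is at most one index i ∈ {0, …, N−1} such that s[i] = a and s[(i+δ) mod N] = b. -/
/-- `s` (as a cyclic sequence of length `N`) is a cyclic robust positioning sequence of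
strength `n` and distance `d`: any two distinct cyclic length-`n` windows have Hamming
distance at least `d`. -/
def IsCRPS {α : Type*} [DecidableEq α] (s : ℕ → α) (N n d : ℕ) : Prop :=
  ∀ i j : ℕ, i < N → j < N → i ≠ j →
    d ≤ hammingDist (fun k : Fin n => s ((i + k) % N)) (fun k : Fin n => s ((j + k) % N))

lemma agree_card_aux {α : Type*} [DecidableEq α] {n : ℕ} (f g : Fin n → α) :
    (Finset.univ.filter fun k => f k = g k).card + hammingDist f g = n := by
  have := Finset.card_filter_add_card_filter_not
    (s := (Finset.univ : Finset (Fin n))) (p := fun k => f k = g k)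
  simpa [hammingDist] using this

/-- A cyclic sequence `s` of length `N` is an `(n, n−1)`-cyclic robust positioning sequence
if and only if for every `δ ∈ {1, …, n−1}` and every ordered pair `(a,b)`, there is at most
one index `i < N` with `s[i] = a` and `s[(i+δ) mod N] = b`. -/
theorem crps_iff_pairs {α : Type*} [DecidableEq α] (s : ℕ → α) (N n : ℕ) :
    IsCRPS s N n (n - 1) ↔
      ∀ δ : ℕ, 1 ≤ δ → δ ≤ n - 1 → ∀ a b : α,
        ∀ i j : ℕ, i < N → j < N →
          s i = a → s ((i + δ) % N) = b → s j = a → s ((j + δ) % N) = b → i = j := by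
  constructor
  · intro h δ hδ1 hδ2 a b i j hi hj hia hib hja hjb
    by_contra hij
    have hn : 2 ≤ n := by omega
    have hd := h i j hi hj hij
    set f : Fin n → α := fun k => s ((i + k) % N) with hf
    set g : Fin n → α := fun k => s ((j + k) % N) with hg
    have key := agree_card_aux f g
    have h0 : f ⟨0, by omega⟩ = g ⟨0, by omega⟩ := by
      simp only [hf, hg]
      simp [Nat.mod_eq_of_lt hi, Nat.mod_eq_of_lt hj, hia, hja]
    have hδe : f ⟨δ, by omega⟩ = g ⟨δ, by omega⟩ := by
      simp only [hf, hg]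
      simp [hib, hjb]
    have hsub : ({⟨0, by omega⟩, ⟨δ, by omega⟩} : Finset (Fin n)) ⊆
        Finset.univ.filter (fun k => f k = g k) := by
      intro x hx
      simp only [Finset.mem_insert, Finset.mem_singleton] at hx
      rcases hx with rfl | rfl <;> simp [h0, hδe]
    have hcard2 : 2 ≤ (Finset.univ.filter fun k => f k = g k).card := by
      have hne : (⟨0, by omega⟩ : Fin n) ≠ ⟨δ, by omega⟩ := by
        intro hc
        have := Fin.mk.injEq 0 _ δ _ ▸ hc
        simp [Fin.ext_iff] at hc
        omega
      calc 2 = ({⟨0, by omega⟩, ⟨δ, by omega⟩} : Finset (Fin n)).card := by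
              rw [Finset.card_insert_of_notMem (by simp [hne]), Finset.card_singleton]
        _ ≤ _ := Finset.card_le_card hsub
    omega
  · intro h i j hi hj hij
    have hN : 0 < N := by omega
    set f : Fin n → α := fun k => s ((i + k) % N) with hf
    set g : Fin n → α := fun k => s ((j + k) % N) with hg
    have key := agree_card_aux f g
    have hcard : (Finset.univ.filter fun k => f k = g k).card ≤ 1 := by
      apply Finset.card_le_one.mpr
      have main : ∀ k1 k2 : Fin n, k1 ≤ k2 →
          k1 ∈ Finset.univ.filter (fun k => f k = g k) →
          k2 ∈ Finset.univ.filter (fun k => f k = g k) → k1 = k2 := by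
        intro k1 k2 hle hk1 hk2
        simp only [Finset.mem_filter, Finset.mem_univ, true_and] at hk1 hk2
        by_contra hne
        have hlt : (k1 : ℕ) < (k2 : ℕ) := by
          rcases lt_or_eq_of_le hle with h' | h'
          · exact h'
          · exact absurd h' hne
        set δ := (k2 : ℕ) - (k1 : ℕ) with hδ
        have hδ1 : 1 ≤ δ := by omega
        have hδ2 : δ ≤ n - 1 := by
          have := k2.isLt
          omega
        have heq := h δ hδ1 hδ2 (s ((i + k1) % N)) (s ((i + k2) % N))
          ((i + k1) % N) ((j + k1) % N) (Nat.mod_lt _ hN) (Nat.mod_lt _ hN)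
          rfl
          (by rw [Nat.mod_add_mod]
              have : i + (k1 : ℕ) + δ = i + (k2 : ℕ) := by omega
              rw [this])
          hk1.symm
          (by rw [Nat.mod_add_mod]
              have : j + (k1 : ℕ) + δ = j + (k2 : ℕ) := by omega
              rw [this]; exact hk2.symm)
        have : i % N = j % N := by
          have h1 : (i + (k1 : ℕ)) % N = (j + (k1 : ℕ)) % N := heq
          have h2 : Nat.ModEq N (i + (k1 : ℕ)) (j + (k1 : ℕ)) := h1
          exact Nat.ModEq.add_right_cancel' _ h2
        rw [Nat.mod_eq_of_lt hi, Nat.mod_eq_of_lt hj] at this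
        exact hij this
      intro x hx y hy
      rcases le_total x y with hle | hle
      · exact main x y hle hx hy
      · exact (main y x hle hy hx).symm
    omega
end

section
/- Let p, r be primes with p > n, r > n and r² ≥ p − 1. For d ∈ F_p \ {0} let c_d = (d, 2d, …, (p−1)d) over F_p, and for (a,b) ∈ F_r² let s_{a,b} = ((0,b), (1, a+b), …, (n−1, (n−1)a + b)) over E = {0,…,n−1} × F_r. Pick p−1 distinct pairs (a_k, b_k) ∈ F_r² and set s_k = s_{a_k, b_k}. Then the cyclic sequence C = c_1 s_1 c_2 s_2 ⋯ c_{p−1} s_{p−1} over the alphabet F_p ∪ E (disjoint union) is a cyclic robust positioning sequence of strength n and distance n−1: for every δ ∈ {1,…,n−1}, every ordered pair of alphabet symbols appears in C at cyclic distance δ at most once. -/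
private lemma zmod_cast_inj {p : ℕ} (hp : p.Prime) {a b : ℕ} (ha : a < p) (hb : b < p)
    (h : (a : ZMod p) = (b : ZMod p)) : a = b := by
  haveI : NeZero p := ⟨hp.pos.ne'⟩
  have := congrArg ZMod.val h
  rwa [ZMod.val_natCast_of_lt ha, ZMod.val_natCast_of_lt hb] at this

private lemma zmod_cast_ne_zero {p : ℕ} (hp : p.Prime) {a : ℕ} (h0 : 0 < a) (ha : a < p) :
    (a : ZMod p) ≠ 0 := by
  intro h
  have : a = 0 := zmod_cast_inj hp ha hp.pos (by simpa using h)
  omega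

private lemma mod_helper {P L b o : ℕ} (hb : b < P) (ho : o < L) :
    (b * L + o) % (P * L) = b * L + o := by
  refine Nat.mod_eq_of_lt ?_
  have h1 : (b + 1) * L ≤ P * L := Nat.mul_le_mul_right _ hb
  have h2 : (b + 1) * L = b * L + L := by ring
  omega

/-- Construction 5: let `p, r` be primes with `p > n`, `r > n` and `r² ≥ p − 1`. For each
`d ∈ F_p \ {0}` let `c_d = (d, 2d, …, (p−1)d)`; for `p − 1` distinct pairs
`(a_k, b_k) ∈ F_r²` let `s_k = ((0, b_k), (1, a_k + b_k), …, (n−1, (n−1)a_k + b_k))`.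
Then the cyclic sequence `C = c_1 s_1 c_2 s_2 ⋯ c_{p−1} s_{p−1}` of length
`(p−1)(p−1+n)` over the disjoint union `F_p ⊕ ({0,…,n−1} × F_r)` is a cyclic robust
positioning sequence of strength `n` and distance `n − 1`: for every `δ ∈ {1,…,n−1}`,
every ordered pair of alphabet symbols appears in `C` at cyclic distance `δ` at most once. -/
theorem construction5_is_crps
    (p r n : ℕ) (hp : p.Prime) (hr : r.Prime)
    (hpn : n < p) (hrn : n < r) (hr2 : p - 1 ≤ r ^ 2) (hn : 0 < n)
    (pairs : Fin (p - 1) → ZMod r × ZMod r) (hinj : Function.Injective pairs)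
    (C : ℕ → ZMod p ⊕ (Fin n × ZMod r))
    (hC : ∀ b : Fin (p - 1), ∀ o : ℕ,
      (∀ _ho : o < p - 1,
        C ((b : ℕ) * (p - 1 + n) + o)
          = Sum.inl (((o + 1 : ℕ) : ZMod p) * (((b : ℕ) + 1 : ℕ) : ZMod p))) ∧
      (∀ (ho : p - 1 ≤ o) (ho2 : o < p - 1 + n),
        C ((b : ℕ) * (p - 1 + n) + o)
          = Sum.inr (⟨o - (p - 1), by omega⟩,
              ((o - (p - 1) : ℕ) : ZMod r) * (pairs b).1 + (pairs b).2))) :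
    ∀ δ : ℕ, 1 ≤ δ → δ ≤ n - 1 →
      ∀ α β : ZMod p ⊕ (Fin n × ZMod r),
        ∀ i j : ℕ, i < (p - 1) * (p - 1 + n) → j < (p - 1) * (p - 1 + n) →
          C i = α → C ((i + δ) % ((p - 1) * (p - 1 + n))) = β →
          C j = α → C ((j + δ) % ((p - 1) * (p - 1 + n))) = β → i = j := by
  intro δ hδ1 hδ2 α β i j hi hj hCi hCiδ hCj hCjδ
  have hp2 : 2 ≤ p := hp.two_le
  have hδn : δ < n := by omega
  have hδp : δ < p := by omega
  have hδr : δ < r := by omega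
  -- classification of any occurrence of the pair (α, β) at distance δ
  have key : ∀ i, i < (p - 1) * (p - 1 + n) → C i = α →
      C ((i + δ) % ((p - 1) * (p - 1 + n))) = β →
      ∃ (b : Fin (p - 1)) (o : ℕ), o < p - 1 + n ∧ i = (b : ℕ) * (p - 1 + n) + o ∧
      ((o + δ < p - 1 ∧
          α = Sum.inl (((o + 1 : ℕ) : ZMod p) * (((b : ℕ) + 1 : ℕ) : ZMod p)) ∧
          β = Sum.inl (((o + δ + 1 : ℕ) : ZMod p) * (((b : ℕ) + 1 : ℕ) : ZMod p))) ∨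
       (o < p - 1 ∧ p - 1 ≤ o + δ ∧
          α = Sum.inl (((o + 1 : ℕ) : ZMod p) * (((b : ℕ) + 1 : ℕ) : ZMod p)) ∧
          ∃ e : Fin n, (e : ℕ) = o + δ - (p - 1) ∧
            β = Sum.inr (e, ((e : ℕ) : ZMod r) * (pairs b).1 + (pairs b).2)) ∨
       (p - 1 ≤ o ∧ o + δ < p - 1 + n ∧
          (∃ e : Fin n, (e : ℕ) = o - (p - 1) ∧
            α = Sum.inr (e, ((e : ℕ) : ZMod r) * (pairs b).1 + (pairs b).2)) ∧
          (∃ e : Fin n, (e : ℕ) = o + δ - (p - 1) ∧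
            β = Sum.inr (e, ((e : ℕ) : ZMod r) * (pairs b).1 + (pairs b).2))) ∨
       (p - 1 + n ≤ o + δ ∧
          (∃ e : Fin n, (e : ℕ) = o - (p - 1) ∧
            α = Sum.inr (e, ((e : ℕ) : ZMod r) * (pairs b).1 + (pairs b).2)) ∧
          β = Sum.inl (((o + δ - (p - 1 + n) + 1 : ℕ) : ZMod p) *
                ((((b : ℕ) + 1) % (p - 1) + 1 : ℕ) : ZMod p)))) := by
    clear hCi hCiδ hCj hCjδ hi hj
    intro i hi hCi hCiδ
    have hL : 0 < p - 1 + n := by omega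
    have hb : i / (p - 1 + n) < p - 1 := by
      rw [Nat.div_lt_iff_lt_mul hL]; omega
    have hio : i = i / (p - 1 + n) * (p - 1 + n) + i % (p - 1 + n) :=
      (Nat.div_add_mod' i (p - 1 + n)).symm
    set b := i / (p - 1 + n) with hbdef
    set o := i % (p - 1 + n) with hodef
    have ho : o < p - 1 + n := Nat.mod_lt _ hL
    rw [hio] at hCi
    refine ⟨⟨b, hb⟩, o, ho, hio, ?_⟩
    rcases lt_or_ge (o + δ) (p - 1) with hA | hBCD
    · -- case A : both positions in the c-part of block b
      left
      have h1 := (hC ⟨b, hb⟩ o).1 (by omega)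
      have h2 := (hC ⟨b, hb⟩ (o + δ)).1 hA
      have hmod : (i + δ) % ((p - 1) * (p - 1 + n)) = b * (p - 1 + n) + (o + δ) := by
        rw [show i + δ = b * (p - 1 + n) + (o + δ) by omega]
        exact mod_helper hb (by omega)
      rw [hmod] at hCiδ
      exact ⟨hA, by rw [← hCi]; exact h1, by rw [← hCiδ]; exact h2⟩
    rcases lt_or_ge o (p - 1) with hB | hCD
    · -- case B : first in c-part, second in s-part of block b
      right; left
      have h1 := (hC ⟨b, hb⟩ o).1 hB
      have h2 := (hC ⟨b, hb⟩ (o + δ)).2 hBCD (by omega)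
      have hmod : (i + δ) % ((p - 1) * (p - 1 + n)) = b * (p - 1 + n) + (o + δ) := by
        rw [show i + δ = b * (p - 1 + n) + (o + δ) by omega]
        exact mod_helper hb (by omega)
      rw [hmod] at hCiδ
      exact ⟨hB, hBCD, by rw [← hCi]; exact h1,
        ⟨o + δ - (p - 1), by omega⟩, rfl, by rw [← hCiδ]; exact h2⟩
    rcases lt_or_ge (o + δ) (p - 1 + n) with hCc | hD
    · -- case C : both positions in the s-part of block b
      right; right; left
      have h1 := (hC ⟨b, hb⟩ o).2 hCD ho
      have h2 := (hC ⟨b, hb⟩ (o + δ)).2 (by omega) hCc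
      have hmod : (i + δ) % ((p - 1) * (p - 1 + n)) = b * (p - 1 + n) + (o + δ) := by
        rw [show i + δ = b * (p - 1 + n) + (o + δ) by omega]
        exact mod_helper hb hCc
      rw [hmod] at hCiδ
      exact ⟨hCD, hCc, ⟨⟨o - (p - 1), by omega⟩, rfl, by rw [← hCi]; exact h1⟩,
        ⟨o + δ - (p - 1), by omega⟩, rfl, by rw [← hCiδ]; exact h2⟩
    · -- case D : first in s-part of block b, second in c-part of next block
      right; right; right
      have hoP : p - 1 ≤ o := by omega
      have h1 := (hC ⟨b, hb⟩ o).2 hoP ho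
      have hb2 : (b + 1) % (p - 1) < p - 1 := Nat.mod_lt _ (by omega)
      have ho2 : o + δ - (p - 1 + n) < p - 1 := by omega
      have h2 := (hC ⟨(b + 1) % (p - 1), hb2⟩ (o + δ - (p - 1 + n))).1 ho2
      have hmod : (i + δ) % ((p - 1) * (p - 1 + n))
          = ((b + 1) % (p - 1)) * (p - 1 + n) + (o + δ - (p - 1 + n)) := by
        rcases lt_or_ge (b + 1) (p - 1) with h | h
        · rw [Nat.mod_eq_of_lt h]
          rw [show i + δ = (b + 1) * (p - 1 + n) + (o + δ - (p - 1 + n)) by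
            have : (b + 1) * (p - 1 + n) = b * (p - 1 + n) + (p - 1 + n) := by ring
            omega]
          exact mod_helper h (by omega)
        · have hbP : b + 1 = p - 1 := by omega
          rw [hbP, Nat.mod_self, zero_mul, zero_add]
          rw [show i + δ = (p - 1) * (p - 1 + n) + (o + δ - (p - 1 + n)) by
            have : (p - 1) * (p - 1 + n) = b * (p - 1 + n) + (p - 1 + n) := by
              rw [← hbP]; ring
            omega]
          rw [Nat.add_mod_left]
          refine Nat.mod_eq_of_lt ?_
          have h1' : 1 * (p - 1 + n) ≤ (p - 1) * (p - 1 + n) :=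
            Nat.mul_le_mul_right _ (by omega)
          omega
      rw [hmod] at hCiδ
      exact ⟨hD, ⟨⟨o - (p - 1), by omega⟩, rfl, by rw [← hCi]; exact h1⟩,
        by rw [← hCiδ]; exact h2⟩
  obtain ⟨bi, oi, hoi, hieq, hcasei⟩ := key i hi hCi hCiδ
  obtain ⟨bj, oj, hoj, hjeq, hcasej⟩ := key j hj hCj hCjδ
  clear key hCi hCiδ hCj hCjδ
  have hbilt : (bi : ℕ) < p - 1 := bi.2
  have hbjlt : (bj : ℕ) < p - 1 := bj.2
  have hδp0 : ((δ : ℕ) : ZMod p) ≠ 0 := zmod_cast_ne_zero hp (by omega) hδp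
  have hδr0 : ((δ : ℕ) : ZMod r) ≠ 0 := zmod_cast_ne_zero hr (by omega) hδr
  haveI : Fact p.Prime := ⟨hp⟩
  haveI : Fact r.Prime := ⟨hr⟩
  suffices h : (bi : ℕ) = (bj : ℕ) ∧ oi = oj by
    obtain ⟨h1, h2⟩ := h
    rw [h1, h2] at hieq
    omega
  rcases hcasei with ⟨hi1, hα1, hβ1⟩ | ⟨hi1, hi2, hα1, e1, he1, hβ1⟩ |
      ⟨hi1, hi2, ⟨e1, he1, hα1⟩, ⟨f1, hf1, hβ1⟩⟩ | ⟨hi1, ⟨e1, he1, hα1⟩, hβ1⟩ <;>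
    rcases hcasej with ⟨hj1, hα2, hβ2⟩ | ⟨hj1, hj2, hα2, e2, he2, hβ2⟩ |
      ⟨hj1, hj2, ⟨e2, he2, hα2⟩, ⟨f2, hf2, hβ2⟩⟩ | ⟨hj1, ⟨e2, he2, hα2⟩, hβ2⟩
  -- A/A
  · rw [hα1, Sum.inl.injEq] at hα2
    rw [hβ1, Sum.inl.injEq] at hβ2
    push_cast at hα2 hβ2
    have hbb : ((bi : ℕ) : ZMod p) + 1 = ((bj : ℕ) : ZMod p) + 1 :=
      mul_left_cancel₀ hδp0 (by linear_combination hβ2 - hα2)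
    have hbb' : ((bi : ℕ) + 1 : ℕ) = ((bj : ℕ) + 1 : ℕ) :=
      zmod_cast_inj hp (by omega) (by omega) (by push_cast; exact hbb)
    have hbn : (bi : ℕ) = (bj : ℕ) := by omega
    have hbz : (((bi : ℕ) : ZMod p) + 1) ≠ 0 := by
      have := zmod_cast_ne_zero hp (a := (bi : ℕ) + 1) (by omega) (by omega)
      push_cast at this; exact this
    have hoo : ((oi : ℕ) : ZMod p) + 1 = ((oj : ℕ) : ZMod p) + 1 := by
      refine mul_right_cancel₀ hbz ?_
      rw [hα2, hbn]
    have : (oi + 1 : ℕ) = (oj + 1 : ℕ) :=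
      zmod_cast_inj hp (by omega) (by omega) (by push_cast; exact hoo)
    exact ⟨hbn, by omega⟩
  · rw [hβ1] at hβ2; exact absurd hβ2 (by simp)
  · rw [hα1] at hα2; exact absurd hα2 (by simp)
  · rw [hα1] at hα2; exact absurd hα2 (by simp)
  · rw [hβ1] at hβ2; exact absurd hβ2 (by simp)
  -- B/B
  · rw [hβ1, Sum.inr.injEq, Prod.mk.injEq] at hβ2
    obtain ⟨hef, _⟩ := hβ2
    have hev : (e1 : ℕ) = (e2 : ℕ) := by rw [hef]
    have hco : oi = oj := by omega
    subst hco
    rw [hα1, Sum.inl.injEq] at hα2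
    have hoz : ((oi + 1 : ℕ) : ZMod p) ≠ 0 := zmod_cast_ne_zero hp (by omega) (by omega)
    have hcb : (((bi : ℕ) + 1 : ℕ) : ZMod p) = (((bj : ℕ) + 1 : ℕ) : ZMod p) :=
      mul_left_cancel₀ hoz hα2
    have := zmod_cast_inj hp (a := (bi : ℕ) + 1) (b := (bj : ℕ) + 1)
      (by omega) (by omega) hcb
    exact ⟨by omega, rfl⟩
  · rw [hα1] at hα2; exact absurd hα2 (by simp)
  · rw [hα1] at hα2; exact absurd hα2 (by simp)
  · rw [hα1] at hα2; exact absurd hα2 (by simp)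
  · rw [hα1] at hα2; exact absurd hα2 (by simp)
  -- C/C
  · rw [hα1, Sum.inr.injEq, Prod.mk.injEq] at hα2
    rw [hβ1, Sum.inr.injEq, Prod.mk.injEq] at hβ2
    obtain ⟨hef, hv⟩ := hα2
    obtain ⟨hff, hw⟩ := hβ2
    have hev : (e1 : ℕ) = (e2 : ℕ) := by rw [hef]
    have hco : oi = oj := by omega
    subst hco
    have hfe1 : (f1 : ℕ) = (e1 : ℕ) + δ := by omega
    have hfe2 : (f2 : ℕ) = (e2 : ℕ) + δ := by omega
    rw [hev] at hv
    rw [hfe1, hfe2, hev] at hw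
    push_cast at hv hw
    have ha : (pairs bi).1 = (pairs bj).1 :=
      mul_left_cancel₀ hδr0 (by linear_combination hw - hv)
    have hbb : (pairs bi).2 = (pairs bj).2 := by
      linear_combination hv - ((e2 : ℕ) : ZMod r) * ha
    have : bi = bj := hinj (Prod.ext ha hbb)
    exact ⟨by rw [this], rfl⟩
  · rw [hβ1] at hβ2; exact absurd hβ2 (by simp)
  · rw [hα1] at hα2; exact absurd hα2 (by simp)
  · rw [hα1] at hα2; exact absurd hα2 (by simp)
  · rw [hβ1] at hβ2; exact absurd hβ2 (by simp)
  -- D/D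
  · rw [hα1, Sum.inr.injEq, Prod.mk.injEq] at hα2
    obtain ⟨hef, _⟩ := hα2
    have hev : (e1 : ℕ) = (e2 : ℕ) := by rw [hef]
    have hco : oi = oj := by omega
    subst hco
    rw [hβ1, Sum.inl.injEq] at hβ2
    have hoz : ((oi + δ - (p - 1 + n) + 1 : ℕ) : ZMod p) ≠ 0 :=
      zmod_cast_ne_zero hp (by omega) (by omega)
    have hcast : ((((bi : ℕ) + 1) % (p - 1) + 1 : ℕ) : ZMod p)
        = ((((bj : ℕ) + 1) % (p - 1) + 1 : ℕ) : ZMod p) :=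
      mul_left_cancel₀ hoz hβ2
    have hmlt1 : ((bi : ℕ) + 1) % (p - 1) < p - 1 := Nat.mod_lt _ (by omega)
    have hmlt2 : ((bj : ℕ) + 1) % (p - 1) < p - 1 := Nat.mod_lt _ (by omega)
    have hmm : ((bi : ℕ) + 1) % (p - 1) = ((bj : ℕ) + 1) % (p - 1) := by
      have := zmod_cast_inj hp (a := ((bi : ℕ) + 1) % (p - 1) + 1)
        (b := ((bj : ℕ) + 1) % (p - 1) + 1) (by omega) (by omega) hcast
      omega
    have hbi' : ((bi : ℕ) + 1) % (p - 1)
        = if (bi : ℕ) + 1 = p - 1 then 0 else (bi : ℕ) + 1 := by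
      split
      · next h => rw [h, Nat.mod_self]
      · next h => exact Nat.mod_eq_of_lt (by omega)
    have hbj' : ((bj : ℕ) + 1) % (p - 1)
        = if (bj : ℕ) + 1 = p - 1 then 0 else (bj : ℕ) + 1 := by
      split
      · next h => rw [h, Nat.mod_self]
      · next h => exact Nat.mod_eq_of_lt (by omega)
    refine ⟨?_, rfl⟩
    rw [hbi', hbj'] at hmm
    split at hmm <;> split at hmm <;> omega
end

section
/- In the modular RPS built from a Gray-code ordering of Reed–Solomon codewords: let C_RS ⊆ F_q^{n_R} be a code of minimum distance n_R − k_R + 1 with systematic encoding, let (σ_0, …, σ_{M−1}) be a (k_R, r)-Gray code over a subset X ⊆ F_q (so consecutive σ_i differ in exactly one coordinate), and let c_i ∈ C_RS have prefix σ_i. Then the concatenation c_0 c_1 ⋯ c_{M−1} is an (n_R, d+1)_q modular robust positioning sequence, where d + 1 = (n_R − k_R)/2: any two distinct length-n_R subwords starting at positions congruent mod n_R have Hamming distance at least d + 1. -/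
/-- `s` (restricted to its first `N` entries) is a modular robust positioning sequence of
strength `n` and distance `d`: any two distinct contiguous length-`n` subwords starting at
the same modular position (indices congruent mod `n`) have Hamming distance at least `d`. -/
def IsMRPS {α : Type*} [DecidableEq α] (s : ℕ → α) (N n d : ℕ) : Prop :=
  ∀ i j : ℕ, i + n ≤ N → j + n ≤ N → i ≠ j → i % n = j % n →
    d ≤ hammingDist (window s n i) (window s n j)

/-!
Let the codewords `c_a` have length `n` and message length `k`. A window starting at `n * a + r`
with `0 < r < n` is the tail `c_a[r, n)` followed by the head `c_{a+1}[0, r)`. By the Gray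
property `c_a` and `c_{a+1}` agree on their first `k` symbols except in one place, so on
`[0, m)`, `m = min r k`, the pairs `(c_a, c_b)` and `(c_{a+1}, c_{b+1})` differ in the same
places up to two. Both pairs are at distance at least `n - k + 1`, and the window misses at most
`r - m` of the differences of the first pair outside `[0, m)` and at most `n - r` of the second.
So the window distance is at least both `n - k - 1 - (r - m)` and `r - k + 1`, hence at least
`(n - k) / 2`.
-/

open Finset

section DiffCount

variable {α : Type*} [DecidableEq α]

def diffCount (f g : ℕ → α) (lo hi : ℕ) : ℕ := #{k ∈ Ico lo hi | f k ≠ g k}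

theorem diffCount_add {f g : ℕ → α} {lo mid hi : ℕ} (h₁ : lo ≤ mid) (h₂ : mid ≤ hi) :
    diffCount f g lo mid + diffCount f g mid hi = diffCount f g lo hi := by
  rw [diffCount, diffCount, diffCount, ← card_union_of_disjoint
    (disjoint_filter_filter (Ico_disjoint_Ico_consecutive lo mid hi)), ← filter_union,
    Ico_union_Ico_eq_Ico h₁ h₂]

theorem diffCount_le (f g : ℕ → α) (lo hi : ℕ) : diffCount f g lo hi ≤ hi - lo :=
  (card_filter_le _ _).trans (Nat.card_Ico lo hi).le

theorem diffCount_triangle (f g h : ℕ → α) (lo hi : ℕ) :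
    diffCount f h lo hi ≤ diffCount f g lo hi + diffCount g h lo hi := by
  refine (card_le_card fun k hk => ?_).trans (card_union_le _ _)
  simp only [mem_union, mem_filter] at hk ⊢
  by_cases hfg : f k = g k
  · exact .inr ⟨hk.1, hfg ▸ hk.2⟩
  · exact .inl ⟨hk.1, hfg⟩

theorem diffCount_comm (f g : ℕ → α) (lo hi : ℕ) :
    diffCount f g lo hi = diffCount g f lo hi := by
  simp only [diffCount, ne_comm]

theorem diffCount_comp_add_left (f g : ℕ → α) (m lo hi : ℕ) :
    diffCount (fun k => f (m + k)) (fun k => g (m + k)) lo hi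
      = diffCount f g (m + lo) (m + hi) := by
  rw [diffCount, diffCount, ← map_add_left_Ico, filter_map, card_map]
  rfl

theorem hammingDist_eq_diffCount {n : ℕ} (f g : ℕ → α) :
    hammingDist (fun k : Fin n => f k) (fun k : Fin n => g k) = diffCount f g 0 n := by
  rw [hammingDist, diffCount, Nat.Ico_zero_eq_range, ← Nat.Iio_eq_range,
    ← Fin.map_valEmbedding_univ, filter_map, card_map]
  rfl

theorem diffCount_splice (f g : ℕ → α) {r n : ℕ} (hr : r ≤ n) :
    diffCount (fun k => f (r + k)) (fun k => g (r + k)) 0 n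
      = diffCount f g r n + diffCount (fun k => f (n + k)) (fun k => g (n + k)) 0 r := by
  rw [diffCount_comp_add_left, diffCount_comp_add_left, add_zero, add_zero,
    ← diffCount_add hr (by omega), add_comm r n]

theorem hammingDist_window_add (s : ℕ → α) {n r : ℕ} (hr : r ≤ n) (x y : ℕ) :
    hammingDist (window s n (x + r)) (window s n (y + r))
      = diffCount (fun t => s (x + t)) (fun t => s (y + t)) r n
        + diffCount (fun t => s (x + n + t)) (fun t => s (y + n + t)) 0 r := by
  calc hammingDist (window s n (x + r)) (window s n (y + r))
      = diffCount (fun t => s (x + (r + t))) (fun t => s (y + (r + t))) 0 n := by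
        unfold window
        simp only [add_assoc]
        exact hammingDist_eq_diffCount (fun t => s (x + (r + t))) (fun t => s (y + (r + t)))
    _ = _ := by
        simpa only [add_assoc] using diffCount_splice (fun t => s (x + t)) (fun t => s (y + t)) hr

theorem sub_div_two_le_diffCount_add {u u' v v' : ℕ → α} {n k r : ℕ} (hr : r ≤ n)
    (hcur : n - k + 1 ≤ diffCount u v 0 n) (hnext : n - k + 1 ≤ diffCount u' v' 0 n)
    (hu : diffCount u u' 0 k ≤ 1) (hv : diffCount v v' 0 k ≤ 1) :
    (n - k) / 2 ≤ diffCount u v r n + diffCount u' v' 0 r := by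
  have hmr : min r k ≤ r := min_le_left r k
  have hmk : min r k ≤ k := min_le_right r k
  have hprefix : diffCount u v 0 (min r k) ≤ 2 + diffCount u' v' 0 (min r k) := by
    have := diffCount_add (f := u) (g := u') (Nat.zero_le _) hmk
    have := diffCount_add (f := v) (g := v') (Nat.zero_le _) hmk
    have := diffCount_triangle u u' v 0 (min r k)
    have := diffCount_triangle u' v' v 0 (min r k)
    rw [diffCount_comm v'] at this
    omega
  have := diffCount_add (f := u) (g := v) (Nat.zero_le _) hmr
  have := diffCount_add (f := u) (g := v) (Nat.zero_le r) hr
  have := diffCount_add (f := u') (g := v') (Nat.zero_le _) hmr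
  have := diffCount_add (f := u') (g := v') (Nat.zero_le r) hr
  have := diffCount_le u v (min r k) r
  have := diffCount_le u' v' r n
  omega

end DiffCount

section Concat

variable {α : Type*} {M n : ℕ} (hM : 0 < M) (hn : 0 < n) (c : Fin M → Fin n → α)

def concatWords : ℕ → α :=
  fun t => c ⟨t / n % M, Nat.mod_lt _ hM⟩ ⟨t % n, Nat.mod_lt _ hn⟩

theorem concatWords_mul_add {a t : ℕ} (ha : a < M) (ht : t < n) :
    concatWords hM hn c (n * a + t) = c ⟨a, ha⟩ ⟨t, ht⟩ := by
  simp only [concatWords, Nat.mul_add_div hn, Nat.div_eq_of_lt ht, add_zero, Nat.mod_eq_of_lt ha,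
    Nat.mul_add_mod, Nat.mod_eq_of_lt ht]

variable [DecidableEq α]

theorem hammingDist_castLE_eq_diffCount {m : ℕ} (hm : m ≤ n) {a b : ℕ} (ha : a < M)
    (hb : b < M) :
    hammingDist (fun k : Fin m => c ⟨a, ha⟩ (Fin.castLE hm k))
        (fun k : Fin m => c ⟨b, hb⟩ (Fin.castLE hm k))
      = diffCount (fun t => concatWords hM hn c (n * a + t))
          (fun t => concatWords hM hn c (n * b + t)) 0 m := by
  rw [← hammingDist_eq_diffCount]
  congr 1 <;> funext k <;> exact (concatWords_mul_add hM hn c _ (by omega)).symm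

theorem hammingDist_eq_diffCount_concatWords {a b : ℕ} (ha : a < M) (hb : b < M) :
    hammingDist (c ⟨a, ha⟩) (c ⟨b, hb⟩)
      = diffCount (fun t => concatWords hM hn c (n * a + t))
          (fun t => concatWords hM hn c (n * b + t)) 0 n := by
  simpa only [Fin.castLE_rfl, id_eq] using hammingDist_castLE_eq_diffCount hM hn c le_rfl ha hb

end Concat

/-- The modular RPS built from a Gray-code ordering of Reed–Solomon codewords: let the
codewords `c_0, …, c_{M−1}` of length `n_R` have pairwise Hamming distance at least
`n_R − k_R + 1` (minimum distance of the Reed–Solomon code), and suppose consecutive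
codewords differ in exactly one coordinate of their length-`k_R` prefixes (the Gray-code
property, via systematic encoding `c_i[0, k_R−1] = σ_i`). Then with `d + 1 = (n_R − k_R)/2`,
the concatenation `c_0 c_1 ⋯ c_{M−1}` is an `(n_R, d+1)` modular robust positioning
sequence. -/
theorem gray_rs_concat_is_mrps {α : Type*} [DecidableEq α]
    (M nR kR d : ℕ) (hM : 0 < M) (hk : kR < nR) (hd : nR - kR = 2 * d + 2)
    (c : Fin M → Fin nR → α)
    (hmin : ∀ i j : Fin M, i ≠ j → nR - kR + 1 ≤ hammingDist (c i) (c j))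
    (hgray : ∀ i : Fin M, ∀ h : (i : ℕ) + 1 < M,
      hammingDist (fun k : Fin kR => c i (Fin.castLE hk.le k))
        (fun k : Fin kR => c ⟨(i : ℕ) + 1, h⟩ (Fin.castLE hk.le k)) = 1) :
    IsMRPS (fun t => c ⟨(t / nR) % M, Nat.mod_lt _ hM⟩ ⟨t % nR, Nat.mod_lt _ (by omega)⟩)
      (M * nR) nR (d + 1) := by
  have hn : 0 < nR := by omega
  change IsMRPS (concatWords hM hn c) (M * nR) nR (d + 1)
  intro i j hi hj hij hmod
  obtain ⟨a, r, hr, rfl⟩ : ∃ a r, r < nR ∧ i = nR * a + r :=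
    ⟨i / nR, i % nR, Nat.mod_lt _ hn, (Nat.div_add_mod i nR).symm⟩
  obtain ⟨b, rfl⟩ : ∃ b, j = nR * b + r := by
    refine ⟨j / nR, ?_⟩
    rw [Nat.mul_add_mod, Nat.mod_eq_of_lt hr] at hmod
    rw [hmod, Nat.div_add_mod]
  have hab : a ≠ b := by rintro rfl; exact hij rfl
  have ha : a < M := by nlinarith
  have hb : b < M := by nlinarith
  have hdist {a b : ℕ} (ha : a < M) (hb : b < M) (hab : a ≠ b) :=
    (hmin ⟨a, ha⟩ ⟨b, hb⟩ (Fin.ne_of_val_ne hab)).trans_eq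
      (hammingDist_eq_diffCount_concatWords hM hn c ha hb)
  rw [hammingDist_window_add _ hr.le]
  rcases Nat.eq_zero_or_pos r with rfl | hr0
  · have := hdist ha hb hab
    simp only [diffCount, Ico_self, filter_empty, card_empty, add_zero] at this ⊢
    omega
  have ha1 : a + 1 < M := by nlinarith
  have hb1 : b + 1 < M := by nlinarith
  have hstep {a : ℕ} (ha : a < M) (ha1 : a + 1 < M) :=
    (hammingDist_castLE_eq_diffCount hM hn c hk.le ha ha1).symm.trans_le (hgray ⟨a, ha⟩ ha1).le
  have := sub_div_two_le_diffCount_add hr.le (hdist ha hb hab) (hdist ha1 hb1 (by omega))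
    (hstep ha ha1) (hstep hb hb1)
  rw [← mul_add_one, ← mul_add_one]
  omega
end
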